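/- arXiv:1709.08792 — 5 statements merged into one kernel-verified Lean document; each statement's English description precedes it below -/
import Mathlib

section
/- Let V be a scanning function that is g-filling for a function g : ℕ → ℕ. Let w be a bit string of length n and let t be a natural number with t ≥ g(n). Then the number of bit strings α of length t with α ∼_V w is exactly 2^(t−n). -/
open Filter


/-- A scanning function: the next query is never a repetition of an earlier query. -/
def IsScanning (V : List Bool → ℕ) : Prop :=
  ∀ α : List Bool, ∀ i < α.length, V α ≠ V (α.take i)

/-- `V` is `g`-filling: along any run of length `g n`, every position `r < n` is queried. -/
def IsFilling (V : List Bool → ℕ) (g : ℕ → ℕ) : Prop :=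
  ∀ n : ℕ, ∀ α : List Bool, α.length = g n → ∀ r < n, ∃ i < g n, V (α.take i) = r

/-- The first `i` bits of the sequence `Z ∘ V`. -/
def scanList (Z : ℕ → Bool) (V : List Bool → ℕ) : ℕ → List Bool
  | 0 => []
  | n + 1 => scanList Z V n ++ [Z (V (scanList Z V n))]

/-- The sequence `Y = Z ∘ V`, defined recursively by `Y i = Z (V (Y↾i))`. -/
def scanSeq (Z : ℕ → Bool) (V : List Bool → ℕ) (i : ℕ) : Bool :=
  Z (V (scanList Z V i))

/-- `α ∼_V w`: the run `α` is consistent with the string `w`, i.e. every query made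
along `α` that falls inside `w` is answered according to `w`. -/
def ConsistentWith (V : List Bool → ℕ) (α w : List Bool) : Prop :=
  ∀ j < α.length, V (α.take j) < w.length → w.getD (V (α.take j)) false = α.getD j false

/-! Count the consistent extensions of a consistent prefix `β`. Queries along a run are pairwise
distinct, and once the run has length `g |w|` every position of `w` has been queried. A step whose
query is a position of `w` admits exactly one consistent bit, any other step admits both, so the
extensions of length `k` number `2 ^ k / 2 ^ m`, where `m` counts the positions of `w` not yet
queried along `β`. For `β = []` this is `2 ^ t / 2 ^ |w|`. -/

instance List.finite_subtype_length_eq_and {α : Type*} [Finite α] (k : ℕ) (P : List α → Prop) :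
    Finite {l : List α // l.length = k ∧ P l} :=
  ((List.finite_length_eq α k).subset fun _ h => h.1).to_subtype

theorem List.card_subtype_length_succ (C : List Bool → Prop) (k : ℕ) :
    Nat.card {α : List Bool // α.length = k + 1 ∧ C α} =
      Nat.card {α : List Bool // α.length = k ∧ C (false :: α)} +
        Nat.card {α : List Bool // α.length = k ∧ C (true :: α)} := by
  rw [← Nat.card_sum]
  refine Nat.card_congr
    { toFun := fun
        | ⟨false :: α, h⟩ => .inl ⟨α, by simpa using h⟩
        | ⟨true :: α, h⟩ => .inr ⟨α, by simpa using h⟩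
      invFun := fun
        | .inl ⟨α, h⟩ => ⟨false :: α, by simpa using h⟩
        | .inr ⟨α, h⟩ => ⟨true :: α, by simpa using h⟩
      left_inv := fun
        | ⟨false :: _, _⟩ | ⟨true :: _, _⟩ => rfl
      right_inv := fun
        | .inl _ | .inr _ => rfl }

section Scanning

variable {V : List Bool → ℕ}

def queries (V : List Bool → ℕ) (β : List Bool) : Finset ℕ :=
  (Finset.range β.length).image fun i => V (β.take i)

theorem queries_nil : queries V [] = ∅ := rfl

theorem queries_append_singleton (β : List Bool) (b : Bool) :
    queries V (β ++ [b]) = insert (V β) (queries V β) := by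
  simp only [queries, List.length_append, List.length_singleton, Finset.range_add_one,
    Finset.image_insert, List.take_append_of_le_length le_rfl, List.take_length]
  congr 1
  refine Finset.image_congr fun i hi => ?_
  rw [List.take_append_of_le_length (Finset.mem_range.mp hi).le]

theorem IsScanning.notMem_queries (hV : IsScanning V) (β : List Bool) : V β ∉ queries V β := by
  simp only [queries, Finset.mem_image, Finset.mem_range, not_exists, not_and]
  exact fun i hi h => hV β i hi h.symm

theorem IsFilling.range_subset_queries {g : ℕ → ℕ} (hfill : IsFilling V g) {n : ℕ}
    {β : List Bool} (hβ : g n ≤ β.length) : Finset.range n ⊆ queries V β := by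
  intro r hr
  obtain ⟨i, hi, hVi⟩ := hfill n (β.take (g n)) (by simpa using hβ) r (Finset.mem_range.mp hr)
  rw [List.take_take, min_eq_left hi.le] at hVi
  exact Finset.mem_image.mpr ⟨i, Finset.mem_range.mpr (by omega), hVi⟩

variable {w : List Bool}

theorem ConsistentWith.of_append {β γ : List Bool} (h : ConsistentWith V (β ++ γ) w) :
    ConsistentWith V β w := by
  intro j hj
  have := h j (by simp; omega)
  rwa [List.take_append_of_le_length hj.le, List.getD_append _ _ _ _ hj] at this

theorem consistentWith_append_singleton_iff {β : List Bool} {b : Bool} :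
    ConsistentWith V (β ++ [b]) w ↔
      ConsistentWith V β w ∧ (V β < w.length → w.getD (V β) false = b) := by
  have hlast : (β ++ [b]).getD β.length false = b := by simp
  refine ⟨fun h => ⟨h.of_append, ?_⟩, fun ⟨hβ, hb⟩ j hj => ?_⟩
  · simpa [hlast] using h β.length (by simp)
  · rcases (show j < β.length ∨ j = β.length by simp at hj; omega) with hj | rfl
    · rw [List.take_append_of_le_length hj.le, List.getD_append _ _ _ _ hj]
      exact hβ j hj
    · simpa [hlast] using hb

noncomputable def numConsistentExtensions (V : List Bool → ℕ) (w β : List Bool) (k : ℕ) : ℕ :=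
  Nat.card {α : List Bool // α.length = k ∧ ConsistentWith V (β ++ α) w}

theorem numConsistentExtensions_succ (β : List Bool) (k : ℕ) :
    numConsistentExtensions V w β (k + 1) =
      numConsistentExtensions V w (β ++ [false]) k +
        numConsistentExtensions V w (β ++ [true]) k := by
  simpa only [numConsistentExtensions, List.append_assoc, List.singleton_append] using
    List.card_subtype_length_succ (fun α => ConsistentWith V (β ++ α) w) k

theorem numConsistentExtensions_eq_zero {β : List Bool} (hβ : ¬ConsistentWith V β w) (k : ℕ) :
    numConsistentExtensions V w β k = 0 :=
  have : IsEmpty {α : List Bool // α.length = k ∧ ConsistentWith V (β ++ α) w} :=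
    ⟨fun α => hβ α.2.2.of_append⟩
  Nat.card_of_isEmpty

theorem numConsistentExtensions_mul_two_pow (hV : IsScanning V) {g : ℕ → ℕ}
    (hfill : IsFilling V g) {k : ℕ} {β : List Bool} (hβ : ConsistentWith V β w)
    (hk : g w.length ≤ β.length + k) :
    numConsistentExtensions V w β k * 2 ^ (Finset.range w.length \ queries V β).card = 2 ^ k := by
  induction k generalizing β with
  | zero =>
    have hone : numConsistentExtensions V w β 0 = 1 :=
      Nat.card_eq_one_iff_exists.mpr
        ⟨⟨[], rfl, by simpa using hβ⟩, fun α => Subtype.ext (List.length_eq_zero_iff.mp α.2.1)⟩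
    rw [hone, Finset.sdiff_eq_empty_iff_subset.mpr (hfill.range_subset_queries hk)]
    rfl
  | succ k ih =>
    set U := Finset.range w.length \ queries V β
    have ih' (b : Bool) (hb : ConsistentWith V (β ++ [b]) w) :
        numConsistentExtensions V w (β ++ [b]) k * 2 ^ (U.erase (V β)).card = 2 ^ k := by
      rw [← Finset.sdiff_insert, ← queries_append_singleton _ b]
      exact ih hb (by simp; omega)
    rw [numConsistentExtensions_succ]
    by_cases hq : V β < w.length
    · have hmem : V β ∈ U := Finset.mem_sdiff.mpr ⟨Finset.mem_range.mpr hq, hV.notMem_queries β⟩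
      have hforced (b : Bool) (hb : w.getD (V β) false ≠ b) :
          numConsistentExtensions V w (β ++ [b]) k = 0 :=
        numConsistentExtensions_eq_zero
          (fun h => hb ((consistentWith_append_singleton_iff.mp h).2 hq)) k
      obtain ⟨c, hc⟩ : ∃ c, w.getD (V β) false = c := ⟨_, rfl⟩
      have hcons : ConsistentWith V (β ++ [c]) w :=
        consistentWith_append_singleton_iff.mpr ⟨hβ, fun _ => hc⟩
      rw [← Finset.card_erase_add_one hmem, pow_succ, pow_succ, ← ih' c hcons]
      cases c
      · rw [hforced true (by rw [hc]; decide), add_zero, mul_assoc]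
      · rw [hforced false (by rw [hc]; decide), zero_add, mul_assoc]
    · have hfree (b : Bool) : ConsistentWith V (β ++ [b]) w :=
        consistentWith_append_singleton_iff.mpr ⟨hβ, fun h => absurd h hq⟩
      have hU : U.erase (V β) = U :=
        Finset.erase_eq_of_notMem fun h => hq (Finset.mem_range.mp (Finset.mem_sdiff.mp h).1)
      rw [add_mul, ← hU, ih' false (hfree false), ih' true (hfree true), pow_succ, mul_two]

end Scanning

/-- For a `g`-filling scanning function `V`, a string `w` of length `n`, and `t ≥ g n`,
exactly `2^(t-n)` of the bit strings of length `t` are consistent with `w`. -/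
theorem card_consistent_runs (V : List Bool → ℕ) (hV : IsScanning V)
    (g : ℕ → ℕ) (hfill : IsFilling V g)
    (w : List Bool) (n : ℕ) (hw : w.length = n)
    (t : ℕ) (ht : g n ≤ t) :
    Nat.card {α : List Bool // α.length = t ∧ ConsistentWith V α w} = 2 ^ (t - n) := by
  subst hw
  have hcount := numConsistentExtensions_mul_two_pow hV hfill (β := [])
    (fun j hj => absurd hj (Nat.not_lt_zero j)) (by simpa using ht)
  simp only [numConsistentExtensions, List.nil_append, queries_nil, Finset.sdiff_empty,
    Finset.card_range] at hcount
  have hle : w.length ≤ t :=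
    (Nat.pow_dvd_pow_iff_le_right one_lt_two).mp (Dvd.intro_left _ hcount)
  rw [← pow_sub_mul_pow 2 hle] at hcount
  exact Nat.eq_of_mul_eq_mul_right (by positivity) hcount
end

section
/- Let V be a scanning function that is g-filling for a function g : ℕ → ℕ. Let w be a bit string of length n and let α be a bit string with |α| ≥ g(n). Then α ∼_V w if and only if α↾g(n) ∼_V w. -/
open Filter


/-- For a `g`-filling scanning function, consistency with a string `w` of length `n`
only depends on the first `g n` bits of the run. -/
theorem consistentWith_iff_take (V : List Bool → ℕ) (hV : IsScanning V)
    (g : ℕ → ℕ) (hfill : IsFilling V g)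
    (w : List Bool) (n : ℕ) (hw : w.length = n)
    (α : List Bool) (hα : g n ≤ α.length) :
    ConsistentWith V α w ↔ ConsistentWith V (α.take (g n)) w := by
  constructor
  · intro h j hj hVj
    have hjlen : j < (α.take (g n)).length := hj
    rw [List.length_take] at hjlen
    have hjg : j < g n := lt_of_lt_of_le hjlen (min_le_left _ _)
    have hjα : j < α.length := lt_of_lt_of_le hjlen (min_le_right _ _)
    have htt : (α.take (g n)).take j = α.take j := by
      rw [List.take_take, min_eq_left hjg.le]
    rw [htt] at hVj ⊢
    have := h j hjα hVj
    rw [this]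
    rw [List.getD_eq_getElem?_getD, List.getD_eq_getElem?_getD,
      List.getElem?_take, if_pos hjg]
  · intro h j hj hVj
    by_cases hjg : j < g n
    · have htt : (α.take (g n)).take j = α.take j := by
        rw [List.take_take, min_eq_left hjg.le]
      have hjlen : j < (α.take (g n)).length := by
        rw [List.length_take]; exact lt_min hjg hj
      have := h j hjlen (by rw [htt]; exact hVj)
      rw [htt] at this
      rw [this, List.getD_eq_getElem?_getD, List.getD_eq_getElem?_getD,
        List.getElem?_take, if_pos hjg]
    · -- impossible: V (α.take j) < n was already queried before g n
      exfalso
      push_neg at hjg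
      rw [hw] at hVj
      obtain ⟨i, hign, hVi⟩ := hfill n (α.take (g n))
        (by rw [List.length_take, min_eq_left hα]) (V (α.take j)) hVj
      rw [List.take_take, min_eq_left hign.le] at hVi
      have : α.take i = (α.take j).take i := by
        rw [List.take_take, min_eq_left (le_trans hign.le hjg)]
      rw [this] at hVi
      exact hV (α.take j) i (by
        rw [List.length_take, min_eq_left hj.le]
        exact lt_of_lt_of_le hign hjg) hVi.symm
end

section
/- Let V be a scanning function that is g-filling for a function g : ℕ → ℕ, and let B be a martingale. Then for every bit string w, the value 2^(|w|−t) · Σ_{α : |α| = t and α ∼_V w} B(α) is the same for every choice of t ≥ g(|w|) (i.e., this value does not depend on t). -/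
open Filter

/-- The finite bit string consisting of the first `n` bits of the sequence `Z`. -/
def seqTake (Z : ℕ → Bool) (n : ℕ) : List Bool :=
  List.ofFn fun i : Fin n => Z i

/-- A martingale is a positive rational-valued function on bit strings
satisfying the fairness condition `M x = (M x0 + M x1)/2`. -/
def IsMartingale (M : List Bool → ℚ) : Prop :=
  ∀ x : List Bool, 0 < M x ∧ M x = (M (x ++ [false]) + M (x ++ [true])) / 2

/-- `M` succeeds on `Z` if `limsup_n M (Z↾n) = ∞`. -/
def Succeeds (M : List Bool → ℚ) (Z : ℕ → Bool) : Prop :=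
  ∀ c : ℚ, ∃ᶠ n in atTop, c < M (seqTake Z n)

/-- `Z` is computably random if no computable martingale succeeds on it. -/
def ComputablyRandom (Z : ℕ → Bool) : Prop :=
  ∀ M : List Bool → ℚ, Computable M → IsMartingale M → ¬ Succeeds M Z

open scoped Classical in
/-- The average `2^(|w|-t) · Σ_{|α| = t, α ∼_V w} B(α)`, where strings of length `t`
are given as functions `Fin t → Bool`. -/
noncomputable def scanAvg (V : List Bool → ℕ) (B : List Bool → ℚ)
    (t : ℕ) (w : List Bool) : ℚ :=
  (2 : ℚ) ^ ((w.length : ℤ) - (t : ℤ)) *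
    ∑ f : Fin t → Bool,
      if ConsistentWith V (List.ofFn f) w then B (List.ofFn f) else 0

lemma ofFn_snoc' {t : ℕ} (f : Fin t → Bool) (b : Bool) :
    List.ofFn (Fin.snoc f b) = List.ofFn f ++ [b] := by
  rw [List.ofFn_succ']
  simp [List.concat_eq_append]

lemma length_le_V (V : List Bool → ℕ) (hV : IsScanning V)
    (g : ℕ → ℕ) (hfill : IsFilling V g) (w : List Bool)
    (α : List Bool) (hle : g w.length ≤ α.length) : w.length ≤ V α := by
  by_contra h
  push_neg at h
  obtain ⟨i, hi, hVi⟩ := hfill w.length (α.take (g w.length))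
    (by rw [List.length_take]; omega) (V α) h
  rw [List.take_take, min_eq_left hi.le] at hVi
  exact hV α i (by omega) hVi.symm

lemma consistent_append (V : List Bool → ℕ) (w α : List Bool) (b : Bool)
    (hVα : w.length ≤ V α) :
    ConsistentWith V (α ++ [b]) w ↔ ConsistentWith V α w := by
  constructor
  · intro h j hj hVj
    have := h j (by simp; omega)
    rw [List.take_append_of_le_length hj.le] at this
    have h2 := this hVj
    rwa [List.getD_append _ _ _ _ hj] at h2
  · intro h j hj hVj
    simp only [List.length_append, List.length_singleton] at hj
    rcases lt_or_eq_of_le (Nat.lt_succ_iff.mp hj) with hj' | hj'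
    · rw [List.take_append_of_le_length hj'.le] at hVj ⊢
      rw [List.getD_append _ _ _ _ hj']
      exact h j hj' hVj
    · subst hj'
      rw [List.take_append_of_le_length le_rfl, List.take_length] at hVj
      omega

lemma scanAvg_succ (V : List Bool → ℕ) (hV : IsScanning V)
    (g : ℕ → ℕ) (hfill : IsFilling V g)
    (B : List Bool → ℚ) (hB : IsMartingale B)
    (w : List Bool) (t : ℕ) (ht : g w.length ≤ t) :
    scanAvg V B (t + 1) w = scanAvg V B t w := by
  classical
  unfold scanAvg
  rw [← Fintype.sum_equiv ((Fin.snocEquiv (fun _ => Bool)).trans (Equiv.refl _))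
    (fun p : Bool × (Fin t → Bool) =>
      if ConsistentWith V (List.ofFn (Fin.snoc p.2 p.1)) w
        then B (List.ofFn (Fin.snoc p.2 p.1)) else 0) _ (fun p => rfl)]
  rw [Fintype.sum_prod_type_right]
  have key : ∀ f : Fin t → Bool,
      (∑ b : Bool, if ConsistentWith V (List.ofFn (Fin.snoc f b)) w
        then B (List.ofFn (Fin.snoc f b)) else 0)
      = 2 * (if ConsistentWith V (List.ofFn f) w then B (List.ofFn f) else 0) := by
    intro f
    have hlen : (List.ofFn f).length = t := by simp
    have hVge : w.length ≤ V (List.ofFn f) :=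
      length_le_V V hV g hfill w _ (by omega)
    have hc : ∀ b : Bool, ConsistentWith V (List.ofFn f ++ [b]) w
        ↔ ConsistentWith V (List.ofFn f) w := fun b => consistent_append V w _ b hVge
    simp only [Fintype.sum_bool, ofFn_snoc', hc]
    by_cases hcw : ConsistentWith V (List.ofFn f) w
    · simp only [hcw, if_true]
      have := (hB (List.ofFn f)).2
      linarith
    · simp [hcw]
  simp only [key]
  rw [← Finset.mul_sum, ← mul_assoc]
  congr 1
  rw [← zpow_add_one₀ (two_ne_zero)]
  congr 1
  push_cast
  ring

lemma scanAvg_eq_of_le (V : List Bool → ℕ) (hV : IsScanning V)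
    (g : ℕ → ℕ) (hfill : IsFilling V g)
    (B : List Bool → ℚ) (hB : IsMartingale B)
    (w : List Bool) (t : ℕ) (ht : g w.length ≤ t) :
    scanAvg V B t w = scanAvg V B (g w.length) w := by
  induction t with
  | zero =>
    have h0 : g w.length = 0 := by omega
    rw [h0]
  | succ n ih =>
    rcases Nat.lt_or_ge (g w.length) (n + 1) with h | h
    · rw [scanAvg_succ V hV g hfill B hB w n (by omega), ih (by omega)]
    · have : g w.length = n + 1 := by omega
      rw [this]

/-- The value `2^(|w|-t) · Σ_{|α| = t, α ∼_V w} B(α)` is independent of the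
choice of `t ≥ g(|w|)`. -/
theorem scanAvg_indep (V : List Bool → ℕ) (hV : IsScanning V)
    (g : ℕ → ℕ) (hfill : IsFilling V g)
    (B : List Bool → ℚ) (hB : IsMartingale B)
    (w : List Bool) (t₁ t₂ : ℕ) (h₁ : g w.length ≤ t₁) (h₂ : g w.length ≤ t₂) :
    scanAvg V B t₁ w = scanAvg V B t₂ w := by
  rw [scanAvg_eq_of_le V hV g hfill B hB w t₁ h₁,
    scanAvg_eq_of_le V hV g hfill B hB w t₂ h₂]
end

section
/- Let V be a scanning function that is g-filling for a function g : ℕ → ℕ with g(n) ≥ n for all n. Let B be a martingale satisfying the savings property: B(β) ≥ B(α) − 2 whenever the string α is a prefix of the string β. Define D(w) = 2^(|w|−g(|w|)) · Σ_{α : |α| = g(|w|) and α ∼_V w} B(α). If B succeeds on the sequence Z ∘ V (i.e., limsup_n B((Z ∘ V)↾n) = ∞), then D succeeds on Z (i.e., limsup_n D(Z↾n) = ∞). -/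
open Filter

open scoped Classical

/-! ### Auxiliary machinery -/

/-- Sum of `F` over all `d`-bit extensions of `α`. -/
def extSum (F : List Bool → ℚ) : ℕ → List Bool → ℚ
  | 0, α => F α
  | d + 1, α => extSum F d (α ++ [false]) + extSum F d (α ++ [true])

lemma extSum_nonneg (F : List Bool → ℚ) (hF : ∀ β, 0 ≤ F β) :
    ∀ d α, 0 ≤ extSum F d α := by
  intro d
  induction d with
  | zero => intro α; exact hF α
  | succ d ih => intro α; exact add_nonneg (ih _) (ih _)

lemma extSum_eq_sum (F : List Bool → ℚ) :
    ∀ d α, extSum F d α = ∑ f : Fin d → Bool, F (α ++ List.ofFn f) := by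
  intro d
  induction d with
  | zero => intro α; simp [extSum]
  | succ d ih =>
    intro α
    have h1 : ∑ f : Fin (d+1) → Bool, F (α ++ List.ofFn f)
        = ∑ p : Bool × (Fin d → Bool), F (α ++ List.ofFn (Fin.cons p.1 p.2)) := by
      rw [← (Fin.consEquiv fun _ : Fin (d+1) => Bool).sum_comp
        (fun f => F (α ++ List.ofFn f))]
      rfl
    have h2 : ∀ (b : Bool) (f : Fin d → Bool),
        F (α ++ List.ofFn (Fin.cons b f)) = F ((α ++ [b]) ++ List.ofFn f) := by
      intro b f
      rw [List.ofFn_succ]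
      simp [Fin.cons_zero, Fin.cons_succ]
    rw [h1, Fintype.sum_prod_type, Fintype.sum_bool]
    simp only [h2]
    rw [extSum, ih, ih]
    ring

/-- The set of positions `< n` queried along the run `α`. -/
def Qset (V : List Bool → ℕ) (n : ℕ) (α : List Bool) : Finset ℕ :=
  (Finset.range n).filter fun r => ∃ j < α.length, V (α.take j) = r

lemma mem_Qset {V : List Bool → ℕ} {n r : ℕ} {α : List Bool} :
    r ∈ Qset V n α ↔ r < n ∧ ∃ j < α.length, V (α.take j) = r := by
  simp [Qset]

lemma Qset_card_le {V : List Bool → ℕ} {n : ℕ} {α : List Bool} :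
    (Qset V n α).card ≤ n := by
  have h : Qset V n α ⊆ Finset.range n := Finset.filter_subset _ _
  simpa using Finset.card_le_card h

lemma Qset_append {V : List Bool → ℕ} {n : ℕ} {α : List Bool} {b : Bool} :
    Qset V n (α ++ [b]) = if V α < n then insert (V α) (Qset V n α) else Qset V n α := by
  have htake : ∀ j ≤ α.length, (α ++ [b]).take j = α.take j := fun j hj =>
    List.take_append_of_le_length hj
  ext r
  have hmem : r ∈ Qset V n (α ++ [b]) ↔ r < n ∧ (r = V α ∨ ∃ j < α.length, V (α.take j) = r) := by
    rw [mem_Qset]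
    constructor
    · rintro ⟨hr, j, hj, hVj⟩
      refine ⟨hr, ?_⟩
      rcases Nat.lt_or_ge j α.length with hj' | hj'
      · exact Or.inr ⟨j, hj', by rwa [htake j (le_of_lt hj')] at hVj⟩
      · have hj'' : j = α.length := by simp at hj; omega
        subst hj''
        rw [htake _ le_rfl, List.take_length] at hVj
        exact Or.inl hVj.symm
    · rintro ⟨hr, h | ⟨j, hj, hVj⟩⟩
      · exact ⟨hr, α.length, by simp, by rw [htake _ le_rfl, List.take_length, h]⟩
      · exact ⟨hr, j, by simp; omega, by rwa [htake j (le_of_lt hj)]⟩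
  by_cases hq : V α < n
  · rw [if_pos hq]
    rw [hmem, Finset.mem_insert, mem_Qset]
    constructor
    · rintro ⟨hr, h | h⟩
      · exact Or.inl h
      · exact Or.inr ⟨hr, h⟩
    · rintro (h | ⟨hr, h⟩)
      · exact ⟨h ▸ hq, Or.inl h⟩
      · exact ⟨hr, Or.inr h⟩
  · rw [if_neg hq, hmem, mem_Qset]
    constructor
    · rintro ⟨hr, h | h⟩
      · exact absurd (h ▸ hr) hq
      · exact ⟨hr, h⟩
    · rintro ⟨hr, h⟩
      exact ⟨hr, Or.inr h⟩

lemma consistentWith_of_prefix {V : List Bool → ℕ} {α β w : List Bool}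
    (h : ConsistentWith V β w) (hp : α <+: β) : ConsistentWith V α w := by
  obtain ⟨s, rfl⟩ := hp
  intro j hj hVj
  have h1 : (α ++ s).take j = α.take j := List.take_append_of_le_length (le_of_lt hj)
  have h2 : (α ++ s).getD j false = α.getD j false := List.getD_append _ _ _ _ hj
  have h3 := h j (by simp; omega) (by rwa [h1])
  rw [h1, h2] at h3
  exact h3

lemma consistentWith_snoc {V : List Bool → ℕ} {α w : List Bool} {b : Bool}
    (h : ConsistentWith V α w) (hb : V α < w.length → w.getD (V α) false = b) :
    ConsistentWith V (α ++ [b]) w := by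
  intro j hj hVj
  rcases Nat.lt_or_ge j α.length with hj' | hj'
  · have h1 : (α ++ [b]).take j = α.take j := List.take_append_of_le_length (le_of_lt hj')
    have h2 : (α ++ [b]).getD j false = α.getD j false := List.getD_append _ _ _ _ hj'
    rw [h1, h2]
    exact h j hj' (by rwa [h1] at hVj)
  · have hj'' : j = α.length := by simp at hj; omega
    subst hj''
    have h1 : (α ++ [b]).take α.length = α := by
      rw [List.take_append_of_le_length le_rfl, List.take_length]
    have h2 : (α ++ [b]).getD α.length false = b := by simp
    rw [h1, h2]
    rw [h1] at hVj
    exact hb hVj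

/-- The key counting/averaging lemma: if all consistent leaves at depth `t` have value
at least `c`, then the weighted sum over extensions is at least `2^(t-n) · c`. -/
lemma extSum_key (V : List Bool → ℕ) (hV : IsScanning V) (w : List Bool)
    (B : List Bool → ℚ) (hBpos : ∀ x, 0 < B x) (t : ℕ) (c : ℚ) (hc : 0 ≤ c)
    (hleaf : ∀ β, β.length = t → ConsistentWith V β w → c ≤ B β) :
    ∀ d α, α.length + d = t → ConsistentWith V α w →
      2 ^ d * c ≤ 2 ^ (w.length - (Qset V w.length α).card) *
        extSum (fun β => if ConsistentWith V β w then B β else 0) d α := by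
  set n := w.length with hn
  set F := fun β => if ConsistentWith V β w then B β else 0 with hF
  have hFnn : ∀ β, 0 ≤ F β := by
    intro β
    by_cases h : ConsistentWith V β w <;> simp [hF, h, (hBpos β).le]
  intro d
  induction d with
  | zero =>
    intro α hlen hcons
    have hBα : c ≤ B α := hleaf α (by omega) hcons
    have h1 : (1 : ℚ) ≤ 2 ^ (n - (Qset V n α).card) := one_le_pow₀ (by norm_num)
    have h2 : extSum F 0 α = B α := by simp [extSum, hF, hcons]
    rw [h2]
    nlinarith [(hBpos α).le]
  | succ d ih =>
    intro α hlen hcons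
    set q := (Qset V n α).card with hq
    have hlen' : ∀ b : Bool, (α ++ [b]).length + d = t := by intro b; simp; omega
    by_cases hVlt : V α < n
    · -- forced step
      set b := w.getD (V α) false with hb
      have hconsb : ConsistentWith V (α ++ [b]) w := consistentWith_snoc hcons fun _ => rfl
      have hnotmem : V α ∉ Qset V n α := by
        rw [mem_Qset]
        rintro ⟨-, j, hj, hVj⟩
        exact hV α j hj hVj.symm
      have hQ : Qset V n (α ++ [b]) = insert (V α) (Qset V n α) := by
        rw [Qset_append, if_pos hVlt]
      have hcard : (Qset V n (α ++ [b])).card = q + 1 := by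
        rw [hQ, Finset.card_insert_of_notMem hnotmem]
      have hqlt : q + 1 ≤ n := hcard ▸ Qset_card_le
      have ihb := ih (α ++ [b]) (hlen' b) hconsb
      rw [hcard] at ihb
      have hns : n - q = (n - (q + 1)) + 1 := by omega
      have hother : ∀ b' : Bool, 0 ≤ extSum F d (α ++ [b']) := fun b' =>
        extSum_nonneg F hFnn d _
      have hpow : (0:ℚ) ≤ 2 ^ (n - q) := by positivity
      have hmain : 2 ^ (d + 1) * c ≤ 2 ^ (n - q) * extSum F d (α ++ [b]) := by
        calc 2 ^ (d + 1) * c = 2 * (2 ^ d * c) := by ring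
          _ ≤ 2 * (2 ^ (n - (q + 1)) * extSum F d (α ++ [b])) := by linarith
          _ = 2 ^ (n - q) * extSum F d (α ++ [b]) := by rw [hns, pow_succ]; ring
      show 2 ^ (d+1) * c ≤ 2 ^ (n - q) * (extSum F d (α ++ [false]) + extSum F d (α ++ [true]))
      cases hbv : b with
      | false =>
        rw [hbv] at hmain
        nlinarith [hother true]
      | true =>
        rw [hbv] at hmain
        nlinarith [hother false]
    · -- free step
      have hconsb : ∀ b : Bool, ConsistentWith V (α ++ [b]) w := fun b =>
        consistentWith_snoc hcons fun h => absurd h hVlt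
      have hQ : ∀ b : Bool, Qset V n (α ++ [b]) = Qset V n α := by
        intro b; rw [Qset_append, if_neg hVlt]
      have ihf := ih (α ++ [false]) (hlen' false) (hconsb false)
      have iht := ih (α ++ [true]) (hlen' true) (hconsb true)
      rw [hQ false] at ihf
      rw [hQ true] at iht
      show 2 ^ (d+1) * c ≤ 2 ^ (n - q) * (extSum F d (α ++ [false]) + extSum F d (α ++ [true]))
      have : (2:ℚ) ^ (d+1) * c = 2 ^ d * c + 2 ^ d * c := by ring
      rw [this, mul_add]
      exact add_le_add ihf iht

lemma scanList_length (Z : ℕ → Bool) (V : List Bool → ℕ) :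
    ∀ m, (scanList Z V m).length = m := by
  intro m
  induction m with
  | zero => rfl
  | succ m ih => simp [scanList, ih]

lemma seqTake_scanSeq (Z : ℕ → Bool) (V : List Bool → ℕ) :
    ∀ m, seqTake (scanSeq Z V) m = scanList Z V m := by
  intro m
  induction m with
  | zero => simp [seqTake, scanList]
  | succ m ih =>
    have h1 : seqTake (scanSeq Z V) (m + 1) = seqTake (scanSeq Z V) m ++ [scanSeq Z V m] := by
      rw [seqTake, List.ofFn_succ', List.concat_eq_append]
      congr 1
    rw [h1, ih, scanList, scanSeq]

lemma seqTake_length (Z : ℕ → Bool) (n : ℕ) : (seqTake Z n).length = n := by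
  simp [seqTake]

lemma seqTake_getD (Z : ℕ → Bool) {n r : ℕ} (hr : r < n) :
    (seqTake Z n).getD r false = Z r := by
  have hlen : r < (seqTake Z n).length := by rw [seqTake_length]; exact hr
  rw [List.getD_eq_getElem _ _ hlen]
  simp [seqTake]

/-- If `B` is a martingale with the savings property succeeding on `Z ∘ V`, then the
averaged martingale `D` succeeds on `Z`. -/
theorem scanAvg_succeeds (V : List Bool → ℕ) (hV : IsScanning V)
    (g : ℕ → ℕ) (hg : ∀ n, n ≤ g n) (hfill : IsFilling V g)
    (B : List Bool → ℚ) (hB : IsMartingale B)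
    (hsave : ∀ α β : List Bool, α <+: β → B α - 2 ≤ B β)
    (D : List Bool → ℚ) (hD : ∀ w : List Bool, D w = scanAvg V B (g w.length) w)
    (Z : ℕ → Bool) (hsucc : Succeeds B (scanSeq Z V)) :
    Succeeds D Z := by

  have hBpos : ∀ x, 0 < B x := fun x => (hB x).1
  intro c
  rw [Filter.frequently_atTop]
  intro N
  set Y := scanSeq Z V with hY
  set c' : ℚ := max c 0 with hc'
  obtain ⟨m, hm⟩ := (hsucc (c' + 2)).exists
  have hmB : c' + 2 < B (scanList Z V m) := by
    rwa [seqTake_scanSeq] at hm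
  set n0 := (Finset.range m).sup fun j => V (scanList Z V j) + 1 with hn0
  set n := max (max m N) n0 with hndef
  have hmn : m ≤ n := le_trans (le_max_left _ _) (le_max_left _ _)
  have hNn : N ≤ n := le_trans (le_max_right _ _) (le_max_left _ _)
  have hquery : ∀ j < m, V (scanList Z V j) < n := by
    intro j hj
    have h1 : V (scanList Z V j) + 1 ≤ n0 :=
      Finset.le_sup (f := fun j => V (scanList Z V j) + 1) (Finset.mem_range.2 hj)
    have h2 : n0 ≤ n := le_max_right _ _
    omega
  set w := seqTake Z n with hw
  have hwlen : w.length = n := seqTake_length Z n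
  set t := g n with ht
  have hnt : n ≤ t := hg n
  have htake : ∀ β, β.length = t → ConsistentWith V β w →
      ∀ k, k ≤ m → β.take k = scanList Z V k := by
    intro β hβ hcons k
    induction k with
    | zero => intro _; simp [scanList]
    | succ k ihk =>
      intro hk
      have hk' : k < m := hk
      have ih := ihk (le_of_lt hk')
      have hkβ : k < β.length := by omega
      have hts : β.take (k + 1) = β.take k ++ [β.getD k false] := by
        rw [List.take_succ, List.getElem?_eq_getElem hkβ, List.getD_eq_getElem β false hkβ]
        rfl
      have hVk : V (β.take k) < w.length := by
        rw [ih, hwlen]; exact hquery k hk'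
      have hcc := hcons k (by omega) hVk
      rw [ih] at hcc hVk
      have hZ : w.getD (V (scanList Z V k)) false = Z (V (scanList Z V k)) := by
        rw [hw]; exact seqTake_getD Z (by rwa [hwlen] at hVk)
      rw [hts, ih, ← hcc, hZ]
      rfl
  have hleaf : ∀ β, β.length = t → ConsistentWith V β w →
      B (scanList Z V m) - 2 ≤ B β := by
    intro β hβ hcons
    have hp : scanList Z V m <+: β := by
      rw [← htake β hβ hcons m le_rfl]
      exact List.take_prefix _ _
    exact hsave _ _ hp
  set c0 : ℚ := B (scanList Z V m) - 2 with hc0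
  have hc0pos : 0 ≤ c0 := by
    have : (0:ℚ) ≤ c' := le_max_right _ _
    simp only [hc0]; linarith
  have hc0c : c < c0 := by
    have : c ≤ c' := le_max_left _ _
    simp only [hc0]; linarith
  have hconsnil : ConsistentWith V ([] : List Bool) w := by
    intro j hj
    exact absurd hj (Nat.not_lt_zero j)
  have hkey := extSum_key V hV w B hBpos t c0 hc0pos hleaf t [] (by simp) hconsnil
  have hQnil : Qset V w.length ([] : List Bool) = ∅ := by
    ext r; simp [Qset]
  rw [hQnil] at hkey
  simp only [Finset.card_empty, Nat.sub_zero, hwlen] at hkey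
  -- hkey : 2 ^ t * c0 ≤ 2 ^ n * extSum F t []
  refine ⟨n, hNn, ?_⟩
  have hsum : extSum (fun β => if ConsistentWith V β w then B β else 0) t []
      = ∑ f : Fin t → Bool, if ConsistentWith V (List.ofFn f) w then B (List.ofFn f) else 0 := by
    rw [extSum_eq_sum]
    simp
  have hDw : D (seqTake Z n) = 2 ^ ((n : ℤ) - t) *
      extSum (fun β => if ConsistentWith V β w then B β else 0) t [] := by
    rw [← hw, hD w, hwlen, scanAvg, hwlen, hsum, ← ht]
  rw [hDw]
  have h2t : (0:ℚ) < 2 ^ t := by positivity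
  have hzpow : (2:ℚ) ^ ((n : ℤ) - t) = 2 ^ n / 2 ^ t := by
    rw [zpow_sub₀ (by norm_num : (2:ℚ) ≠ 0), zpow_natCast, zpow_natCast]
  rw [hzpow, div_mul_eq_mul_div, lt_div_iff₀ h2t]
  calc c * 2 ^ t < c0 * 2 ^ t := by
        exact mul_lt_mul_of_pos_right hc0c h2t
    _ ≤ 2 ^ n * extSum (fun β => if ConsistentWith V β w then B β else 0) t [] := by
        rw [mul_comm]; exact hkey
end

section
/- Let (B_r)_{r ∈ ℕ} be a sequence of martingales and let (n_r)_{r ∈ ℕ} be a strictly increasing sequence of natural numbers. For each r define the delayed martingale B_{r,n_r}(x) = B_r(x) / B_r(x↾min(n_r,|x|)). Then for every bit string x the series L(x) = Σ_{r=0}^∞ 2^(−r) · B_{r,n_r}(x) converges, the value L(x) is a rational number, L(x) > 0, and L(x) = (L(x0) + L(x1))/2; that is, L is a rational-valued martingale. -/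
open Filter

/-- The weighted sum `L(x) = Σ_r 2^(-r) · B_r(x)/B_r(x↾min(n_r,|x|))` of delayed
martingales converges, takes positive rational values, and is itself a martingale. -/
theorem sum_of_delayed_martingales (B : ℕ → List Bool → ℚ)
    (hB : ∀ r : ℕ, IsMartingale (B r))
    (n : ℕ → ℕ) (hn : StrictMono n)
    (L : List Bool → ℝ)
    (hL : ∀ x : List Bool, L x = ∑' r : ℕ,
      (2 : ℝ) ^ (-(r : ℤ)) * ((B r x / B r (x.take (min (n r) x.length)) : ℚ) : ℝ)) :
    (∀ x : List Bool, Summable fun r : ℕ =>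
      (2 : ℝ) ^ (-(r : ℤ)) * ((B r x / B r (x.take (min (n r) x.length)) : ℚ) : ℝ)) ∧
    (∀ x : List Bool, ∃ q : ℚ, L x = (q : ℝ)) ∧
    (∀ x : List Bool, 0 < L x) ∧
    (∀ x : List Bool, L x = (L (x ++ [false]) + L (x ++ [true])) / 2) := by
  have hpos : ∀ r x, 0 < B r x := fun r x => (hB r x).1
  -- abbreviation for the general term
  let g : List Bool → ℕ → ℝ := fun x r =>
    (2 : ℝ) ^ (-(r : ℤ)) * ((B r x / B r (x.take (min (n r) x.length)) : ℚ) : ℝ)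
  have htail : ∀ (x : List Bool) (r : ℕ), x.length ≤ r → g x r = (2:ℝ)^(-(r:ℤ)) := by
    intro x r hr
    have h1 : min (n r) x.length = x.length := min_eq_right (hr.trans hn.le_apply)
    show (2 : ℝ) ^ (-(r : ℤ)) * _ = _
    rw [h1, List.take_length, div_self (hpos r x).ne']
    norm_num
  have hz : ∀ j : ℕ, (2:ℝ)^(-(j:ℤ)) = (2⁻¹)^j := fun j => by
    rw [zpow_neg, zpow_natCast, inv_pow]
  have hsum : ∀ x, Summable (g x) := by
    intro x
    rw [← summable_nat_add_iff x.length]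
    have heq : (fun m => g x (m + x.length)) = fun m => (2:ℝ)^(-(x.length:ℤ)) * (2⁻¹)^m := by
      funext m
      rw [htail x (m + x.length) (Nat.le_add_left _ _),
        show (-((m + x.length : ℕ) : ℤ)) = (-(x.length:ℤ)) + (-(m:ℤ)) by push_cast; ring,
        zpow_add₀ (two_ne_zero), hz, hz]
    rw [heq]
    exact (summable_geometric_of_lt_one (by norm_num) (by norm_num)).mul_left _
  -- termwise martingale identity (at the level of rationals)
  have hterm : ∀ (x : List Bool) (r : ℕ),
      (B r x / B r (x.take (min (n r) x.length)) : ℚ) =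
        ((B r (x ++ [false]) / B r ((x ++ [false]).take (min (n r) (x ++ [false]).length))) +
         (B r (x ++ [true]) / B r ((x ++ [true]).take (min (n r) (x ++ [true]).length)))) / 2 := by
    intro x r
    rcases le_or_gt (n r) x.length with h | h
    · have h1 : min (n r) x.length = n r := min_eq_left h
      have h2 : ∀ b : Bool, min (n r) (x ++ [b]).length = n r := by
        intro b
        simp only [List.length_append, List.length_singleton]
        omega
      have h3 : ∀ b : Bool, (x ++ [b]).take (n r) = x.take (n r) :=
        fun b => List.take_append_of_le_length h
      rw [h1, h2, h2, h3, h3, (hB r x).2]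
      ring
    · have h1 : min (n r) x.length = x.length := min_eq_right h.le
      have h2 : ∀ b : Bool, min (n r) (x ++ [b]).length = (x ++ [b]).length := by
        intro b
        simp only [List.length_append, List.length_singleton]
        omega
      rw [h1, List.take_length, h2, h2, List.take_length, List.take_length,
        div_self (hpos r x).ne', div_self (hpos r _).ne', div_self (hpos r _).ne']
      norm_num
  have hgterm : ∀ x r, g x r = (g (x ++ [false]) r + g (x ++ [true]) r) / 2 := by
    intro x r
    show (2 : ℝ) ^ (-(r : ℤ)) * _ = ((2 : ℝ) ^ (-(r : ℤ)) * _ + (2 : ℝ) ^ (-(r : ℤ)) * _) / 2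
    rw [hterm x r]
    push_cast
    ring
  have hL' : ∀ x, L x = ∑' r, g x r := hL
  refine ⟨hsum, ?_, ?_, ?_⟩
  · -- rationality
    intro x
    set k := x.length with hk
    refine ⟨(∑ i ∈ Finset.range k, (2:ℚ)^(-(i:ℤ)) * (B i x / B i (x.take (min (n i) k))))
        + (2:ℚ)^(-(k:ℤ)) * 2, ?_⟩
    have key := Summable.sum_add_tsum_nat_add k (hsum x)
    have htv : ∑' m : ℕ, g x (m + k) = (2:ℝ)^(-(k:ℤ)) * 2 := by
      have : ∀ m : ℕ, g x (m + k) = (2:ℝ)^(-(k:ℤ)) * (2⁻¹)^m := by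
        intro m
        rw [htail x (m + k) (Nat.le_add_left _ _),
          show (-((m + k : ℕ) : ℤ)) = (-(k:ℤ)) + (-(m:ℤ)) by push_cast; ring,
          zpow_add₀ (two_ne_zero), hz, hz]
      rw [tsum_congr this, tsum_mul_left, tsum_geometric_of_lt_one (by norm_num) (by norm_num)]
      norm_num
    rw [hL' x, ← key, htv]
    push_cast
    congr 1
    exact Finset.sum_congr rfl fun i _ => by
      show (2:ℝ)^(-(i:ℤ)) * _ = _
      push_cast
      ring
  · -- positivity
    intro x
    rw [hL' x]
    refine Summable.tsum_pos (hsum x) (fun r => ?_) 0 ?_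
    · exact mul_nonneg (by positivity)
        (by exact_mod_cast (div_pos (hpos r x) (hpos r _)).le)
    · exact mul_pos (by positivity)
        (by exact_mod_cast div_pos (hpos 0 x) (hpos 0 _))
  · -- martingale property
    intro x
    rw [hL' x, hL' (x ++ [false]), hL' (x ++ [true]),
      ← Summable.tsum_add (hsum _) (hsum _), ← tsum_div_const]
    exact tsum_congr fun r => hgterm x r
end
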